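/- arXiv:2509.00719 — 2 statements merged into one kernel-verified Lean document; each statement's English description precedes it below -/
import Mathlib

section
/- (Exchange condition in trace–determinant form, inequality (9).) Let n ≥ m be an integer, let w*_n be a D-optimal exact design of size n with invertible information matrix M(w*_n), let ℓ be a support index of w*_n, and let i ∈ {1,…,N}. Then n·tr(M(w*_n)⁻¹·(f_i f_iᵀ − f_ℓ f_ℓᵀ)) ≤ det([f_ℓ | f_i]ᵀ M(w*_n)⁻¹ [f_ℓ | f_i]), where [f_ℓ | f_i] is the m×2 matrix with columns f_ℓ and f_i. -/
open Matrix BigOperators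

/-- An approximate design: nonnegative weights summing to one. -/
def IsDesign {N : ℕ} (w : Fin N → ℝ) : Prop :=
  (∀ i, 0 ≤ w i) ∧ ∑ i, w i = 1

/-- An exact design of size `n`: an approximate design with `n * w i` an integer for all `i`. -/
def IsExactDesign {N : ℕ} (n : ℕ) (w : Fin N → ℝ) : Prop :=
  IsDesign w ∧ ∀ i, ∃ z : ℤ, (n : ℝ) * w i = (z : ℝ)

/-- The information matrix `M(w) = ∑ i, w i • f i (f i)ᵀ`. -/
noncomputable def infoMatrix {N m : ℕ} (f : Fin N → Fin m → ℝ) (w : Fin N → ℝ) :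
    Matrix (Fin m) (Fin m) ℝ :=
  ∑ i, w i • vecMulVec (f i) (f i)

/-- The D-criterion `Φ(M) = det(M)^(1/m)`. -/
noncomputable def Dcrit {m : ℕ} (M : Matrix (Fin m) (Fin m) ℝ) : ℝ :=
  M.det ^ ((1 : ℝ) / (m : ℝ))

/-- A D-optimal approximate design. -/
def IsDOptimalApprox {N m : ℕ} (f : Fin N → Fin m → ℝ) (w : Fin N → ℝ) : Prop :=
  IsDesign w ∧ ∀ w' : Fin N → ℝ, IsDesign w' →
    Dcrit (infoMatrix f w') ≤ Dcrit (infoMatrix f w)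

/-- A D-optimal exact design of size `n`. -/
def IsDOptimalExact {N m : ℕ} (f : Fin N → Fin m → ℝ) (n : ℕ) (w : Fin N → ℝ) : Prop :=
  IsExactDesign n w ∧ ∀ w' : Fin N → ℝ, IsExactDesign n w' →
    Dcrit (infoMatrix f w') ≤ Dcrit (infoMatrix f w)

/-- The variance function `v_i(w) = f iᵀ M(w)⁻¹ f i`. -/
noncomputable def varfun {N m : ℕ} (f : Fin N → Fin m → ℝ) (w : Fin N → ℝ) (i : Fin N) : ℝ :=
  f i ⬝ᵥ (infoMatrix f w)⁻¹ *ᵥ f i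

/-- The `m × 2` matrix with first column `a` and second column `b`. -/
def colPair {m : ℕ} (a b : Fin m → ℝ) : Matrix (Fin m) (Fin 2) ℝ :=
  Matrix.of fun i j => ![a i, b i] j

lemma psd_det_nonneg {m : ℕ} {M : Matrix (Fin m) (Fin m) ℝ} (hM : M.PosSemidef) :
    0 ≤ M.det := by
  rw [hM.isHermitian.det_eq_prod_eigenvalues]
  exact Finset.prod_nonneg fun i _ => hM.eigenvalues_nonneg i

lemma trace_mul_vecMulVec {m : ℕ} (B : Matrix (Fin m) (Fin m) ℝ) (u v : Fin m → ℝ) :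
    (B * vecMulVec u v).trace = v ⬝ᵥ B *ᵥ u := by
  simp only [Matrix.trace, Matrix.diag, Matrix.mul_apply, vecMulVec_apply,
    dotProduct, mulVec, Finset.mul_sum]
  exact Finset.sum_congr rfl fun j _ => Finset.sum_congr rfl fun k _ => by ring

lemma colPair_entry {m : ℕ} (B : Matrix (Fin m) (Fin m) ℝ) (a b : Fin m → ℝ) (s t : Fin 2) :
    ((colPair a b)ᵀ * B * colPair a b) s t = (![a, b] s) ⬝ᵥ B *ᵥ (![a, b] t) := by
  have key : ∀ u v : Fin m → ℝ,
      (∑ k, (∑ j, u j * B j k) * v k) = u ⬝ᵥ B *ᵥ v := by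
    intro u v
    simp only [dotProduct, mulVec, Finset.sum_mul, Finset.mul_sum]
    rw [Finset.sum_comm]
    exact Finset.sum_congr rfl fun j _ => Finset.sum_congr rfl fun k _ => by ring
  fin_cases s <;> fin_cases t <;>
    simpa [colPair, Matrix.mul_apply, Matrix.transpose_apply] using key _ _

lemma infoMatrix_posSemidef {N m : ℕ} (f : Fin N → Fin m → ℝ) (w : Fin N → ℝ)
    (hw : ∀ j, 0 ≤ w j) : (infoMatrix f w).PosSemidef := by
  have h : infoMatrix f w =
      (Matrix.of fun (i : Fin N) (j : Fin m) => Real.sqrt (w i) * f i j)ᴴ *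
      (Matrix.of fun (i : Fin N) (j : Fin m) => Real.sqrt (w i) * f i j) := by
    ext j k
    simp only [infoMatrix, Matrix.sum_apply, Matrix.smul_apply, vecMulVec_apply,
      Matrix.mul_apply, Matrix.conjTranspose_apply, Matrix.of_apply, star_trivial,
      smul_eq_mul]
    refine Finset.sum_congr rfl fun p _ => ?_
    have h := Real.sq_sqrt (hw p)
    linear_combination (-(f p j * f p k)) * h
  rw [h]
  exact posSemidef_conjTranspose_mul_self _

theorem exchange_trace_det_form {m N : ℕ} (hm : 2 ≤ m) (hN : 2 ≤ N)
    (f : Fin N → Fin m → ℝ) (n : ℕ) (hn : m ≤ n)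
    (hex : ∃ w : Fin N → ℝ, IsExactDesign n w ∧ (infoMatrix f w).det ≠ 0)
    (wopt : Fin N → ℝ) (hopt : IsDOptimalExact f n wopt)
    (hoptns : (infoMatrix f wopt).det ≠ 0)
    (ℓ : Fin N) (hℓ : 0 < wopt ℓ) (i : Fin N) :
    (n : ℝ) * ((infoMatrix f wopt)⁻¹ *
        (vecMulVec (f i) (f i) - vecMulVec (f ℓ) (f ℓ))).trace ≤
      ((colPair (f ℓ) (f i))ᵀ * (infoMatrix f wopt)⁻¹ * colPair (f ℓ) (f i)).det := by
  classical
  set M := infoMatrix f wopt with hMdef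
  have hn0 : (0 : ℝ) < n := by
    have : 2 ≤ n := le_trans hm hn
    exact_mod_cast lt_of_lt_of_le (by norm_num : (0:ℕ) < 2) this
  have hn' : (n : ℝ) ≠ 0 := ne_of_gt hn0
  -- wopt ℓ ≥ 1/n
  have hwℓ : 1 / (n : ℝ) ≤ wopt ℓ := by
    obtain ⟨z, hz⟩ := hopt.1.2 ℓ
    have hz0 : (0 : ℝ) < (z : ℝ) := by rw [← hz]; positivity
    have hz1 : (1 : ℤ) ≤ z := by exact_mod_cast hz0
    have h1 : (1 : ℝ) ≤ (n : ℝ) * wopt ℓ := by rw [hz]; exact_mod_cast hz1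
    rw [div_le_iff₀ hn0]
    linarith [h1, mul_comm (n : ℝ) (wopt ℓ)]
  -- the exchanged design
  set w' : Fin N → ℝ :=
    fun j => wopt j + (if j = i then 1 / (n:ℝ) else 0) - (if j = ℓ then 1 / (n:ℝ) else 0)
    with hw'def
  have hdes : IsExactDesign n w' := by
    refine ⟨⟨fun j => ?_, ?_⟩, fun j => ?_⟩
    · have h0 := hopt.1.1.1 j
      have hpos' : (0:ℝ) < (n:ℝ)⁻¹ := inv_pos.mpr hn0
      have hwℓ' : (n:ℝ)⁻¹ ≤ wopt ℓ := by rw [← one_div]; exact hwℓ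
      show 0 ≤ wopt j + (if j = i then 1/(n:ℝ) else 0) - (if j = ℓ then 1/(n:ℝ) else 0)
      by_cases hjl : j = ℓ
      · subst hjl
        by_cases hji : j = i
        · subst hji; simp only [if_pos rfl, if_true]; linarith
        · simp only [if_pos rfl, if_neg hji, one_div, if_true]; linarith
      · by_cases hji : j = i
        · subst hji; simp only [if_pos rfl, if_neg hjl, one_div, if_true]; linarith
        · simp only [if_neg hji, if_neg hjl]; linarith
    · simp only [hw'def, Finset.sum_sub_distrib, Finset.sum_add_distrib,
        Finset.sum_ite_eq', Finset.mem_univ, if_true, hopt.1.1.2]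
      ring
    · obtain ⟨z, hz⟩ := hopt.1.2 j
      refine ⟨z + (if j = i then 1 else 0) - (if j = ℓ then 1 else 0), ?_⟩
      simp only [hw'def, mul_sub, mul_add, hz, mul_ite, mul_zero, mul_one_div,
        div_self hn']
      push_cast
      split_ifs <;> ring
  -- matrix form of the exchange
  set F : Matrix (Fin m) (Fin 2) ℝ := colPair (f ℓ) (f i) with hF
  set D : Matrix (Fin 2) (Fin 2) ℝ := !![-(1/(n:ℝ)), 0; 0, 1/(n:ℝ)] with hD
  have hM' : infoMatrix f w' = M + F * D * Fᵀ := by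
    have h1 : infoMatrix f w' =
        M + (1/(n:ℝ)) • vecMulVec (f i) (f i) - (1/(n:ℝ)) • vecMulVec (f ℓ) (f ℓ) := by
      simp only [hMdef, infoMatrix, hw'def, add_smul, sub_smul, ite_smul, zero_smul,
        Finset.sum_add_distrib, Finset.sum_sub_distrib, Finset.sum_ite_eq',
        Finset.mem_univ, if_true]
    have h2 : F * D * Fᵀ =
        (1/(n:ℝ)) • vecMulVec (f i) (f i) - (1/(n:ℝ)) • vecMulVec (f ℓ) (f ℓ) := by
      ext j k
      simp [hF, hD, colPair, Matrix.mul_apply, Fin.sum_univ_two, vecMulVec_apply]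
      ring
    rw [h1, h2]; abel
  -- determinant factorization
  have hUnit : IsUnit M.det := isUnit_iff_ne_zero.mpr hoptns
  set A : Matrix (Fin 2) (Fin 2) ℝ := Fᵀ * M⁻¹ * F with hA
  have hdetM' : (infoMatrix f w').det = M.det * (1 + A * D).det := by
    have e1 : infoMatrix f w' = M * (1 + M⁻¹ * (F * D * Fᵀ)) := by
      rw [Matrix.mul_add, Matrix.mul_one, ← Matrix.mul_assoc,
        Matrix.mul_nonsing_inv _ hUnit, Matrix.one_mul, hM']
    rw [e1, Matrix.det_mul]
    congr 1
    have e2 : M⁻¹ * (F * D * Fᵀ) = (M⁻¹ * F * D) * Fᵀ := by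
      simp only [Matrix.mul_assoc]
    rw [e2, Matrix.det_one_add_mul_comm]
    congr 1
    rw [hA]
    simp only [Matrix.mul_assoc]
  -- det M > 0
  have hMpsd : M.PosSemidef := infoMatrix_posSemidef f wopt hopt.1.1.1
  have hdetMpos : 0 < M.det := lt_of_le_of_ne (psd_det_nonneg hMpsd) (Ne.symm hoptns)
  -- optimality gives det(infoMatrix f w') ≤ det M
  have hdetle : (infoMatrix f w').det ≤ M.det := by
    by_contra h
    push_neg at h
    have hD' := hopt.2 w' hdes
    have : Dcrit M < Dcrit (infoMatrix f w') := by
      unfold Dcrit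
      apply Real.rpow_lt_rpow (le_of_lt hdetMpos) h
      have hm0 : (0:ℝ) < m := by exact_mod_cast lt_of_lt_of_le (by norm_num : (0:ℕ) < 2) hm
      positivity
    linarith
  -- hence (1 + A D).det ≤ 1
  have hq : (1 + A * D).det ≤ 1 := by
    have := hdetM' ▸ hdetle
    nlinarith [hdetMpos]
  -- entries of A
  have hA00 : A 0 0 = f ℓ ⬝ᵥ M⁻¹ *ᵥ f ℓ := by
    rw [hA, hF]; simpa using colPair_entry M⁻¹ (f ℓ) (f i) 0 0
  have hA01 : A 0 1 = f ℓ ⬝ᵥ M⁻¹ *ᵥ f i := by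
    rw [hA, hF]; simpa using colPair_entry M⁻¹ (f ℓ) (f i) 0 1
  have hA10 : A 1 0 = f i ⬝ᵥ M⁻¹ *ᵥ f ℓ := by
    rw [hA, hF]; simpa using colPair_entry M⁻¹ (f ℓ) (f i) 1 0
  have hA11 : A 1 1 = f i ⬝ᵥ M⁻¹ *ᵥ f i := by
    rw [hA, hF]; simpa using colPair_entry M⁻¹ (f ℓ) (f i) 1 1
  set a : ℝ := f ℓ ⬝ᵥ M⁻¹ *ᵥ f ℓ
  set b : ℝ := f ℓ ⬝ᵥ M⁻¹ *ᵥ f i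
  set c : ℝ := f i ⬝ᵥ M⁻¹ *ᵥ f ℓ
  set d : ℝ := f i ⬝ᵥ M⁻¹ *ᵥ f i
  -- expand the 2×2 determinant of 1 + A D
  have hqval : (1 + A * D).det = (1 - a/(n:ℝ)) * (1 + d/(n:ℝ)) + b * c / (n:ℝ)^2 := by
    rw [Matrix.det_fin_two]
    simp only [Matrix.add_apply, Matrix.one_apply, Matrix.mul_apply, Fin.sum_univ_two, hD,
      Matrix.cons_val', Matrix.cons_val_zero, Matrix.cons_val_one, Matrix.head_cons,
      Matrix.head_fin_const, Matrix.empty_val', Matrix.cons_val_fin_one, Matrix.of_apply]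
    rw [hA00, hA01, hA10, hA11]
    norm_num
    ring
  -- rewrite goal
  have htr : (M⁻¹ * (vecMulVec (f i) (f i) - vecMulVec (f ℓ) (f ℓ))).trace = d - a := by
    rw [Matrix.mul_sub, Matrix.trace_sub, trace_mul_vecMulVec, trace_mul_vecMulVec]
  have hdetA : (Fᵀ * M⁻¹ * F).det = a * d - b * c := by
    rw [Matrix.det_fin_two, ← hA, hA00, hA01, hA10, hA11]
  rw [htr]
  have : ((colPair (f ℓ) (f i))ᵀ * M⁻¹ * colPair (f ℓ) (f i)).det = a * d - b * c := by
    rw [← hF]; exact hdetA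
  rw [this]
  -- final arithmetic
  rw [hqval] at hq
  have h2 : ((1 - a/(n:ℝ)) * (1 + d/(n:ℝ)) + b*c/(n:ℝ)^2 - 1) * (n:ℝ)^2 ≤ 0 :=
    mul_nonpos_of_nonpos_of_nonneg (by linarith) (le_of_lt (pow_pos hn0 2))
  have h3 : ((1 - a/(n:ℝ)) * (1 + d/(n:ℝ)) + b*c/(n:ℝ)^2 - 1) * (n:ℝ)^2
      = (n:ℝ)*(d-a) - (a*d - b*c) := by
    field_simp
    ring
  linarith
end

section
/- (Eigenvalue form of the exchange condition, inequality (12).) Let n ≥ m be an integer, let w*∞ be a D-optimal approximate design with invertible information matrix M_*, set s_i = M_*^{−1/2} f_i for i ∈ {1,…,N}, let w*_n be a D-optimal exact design of size n with invertible information matrix, and let B = M_*^{1/2} M(w*_n)⁻¹ M_*^{1/2} have eigenvalues γ₁ ≤ … ≤ γ_m. Then for every support index ℓ of w*_n and every i ∈ {1,…,N}: n·(γ₁·Δ(s_i, s_ℓ) − γ_m·Δ(s_ℓ, s_i)) ≤ γ_{m−1}·γ_m·(‖s_i‖²·‖s_ℓ‖² − (s_iᵀ s_ℓ)²). -/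
open Matrix BigOperators
open scoped MatrixOrder

/-- The Euclidean norm of a vector in `ℝ^m`. -/
noncomputable def eucNorm {m : ℕ} (v : Fin m → ℝ) : ℝ :=
  Real.sqrt (∑ i, v i ^ 2)

/-- The discrepancy `Δ(v,z) = (‖v+z‖‖v−z‖ + ‖v‖² − ‖z‖²)/2` (Euclidean norms). -/
noncomputable def disc {m : ℕ} (v z : Fin m → ℝ) : ℝ :=
  (eucNorm (v + z) * eucNorm (v - z) + eucNorm v ^ 2 - eucNorm z ^ 2) / 2

section Helpers

open Finset

/-- Weighted Lagrange identity. -/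
lemma lagrange_id {ι : Type*} (s : Finset ι) (e P Q : ι → ℝ) :
    (∑ k ∈ s, e k * P k ^ 2) * (∑ k ∈ s, e k * Q k ^ 2) - (∑ k ∈ s, e k * (P k * Q k)) ^ 2
      = (1/2) * ∑ j ∈ s, ∑ k ∈ s, (e j * e k) * (P j * Q k - P k * Q j) ^ 2 := by
  have e4 : ∑ j ∈ s, ∑ k ∈ s, (e j * e k) * (P j * Q k - P k * Q j) ^ 2
      = ∑ j ∈ s, ∑ k ∈ s, ((e j * P j ^ 2) * (e k * Q k ^ 2) + (e j * Q j ^ 2) * (e k * P k ^ 2)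
          - 2 * ((e j * (P j * Q j)) * (e k * (P k * Q k)))) := by
    refine Finset.sum_congr rfl fun j _ => Finset.sum_congr rfl fun k _ => by ring
  rw [e4]
  simp only [Finset.sum_add_distrib, Finset.sum_sub_distrib, ← Finset.mul_sum]
  simp only [Finset.sum_add_distrib, ← Finset.sum_mul]
  ring

lemma abs_weighted_sum_le {m : ℕ} (e a b : Fin m → ℝ) (c r : ℝ) (hr : 0 ≤ r)
    (h : ∀ k, |e k - c| ≤ r) :
    |∑ k, (e k - c) * (a k * b k)|
      ≤ r * (Real.sqrt (∑ k, a k ^ 2) * Real.sqrt (∑ k, b k ^ 2)) := by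
  have h1 : |∑ k, (e k - c) * (a k * b k)| ≤ ∑ k, r * (|a k| * |b k|) := by
    refine (Finset.abs_sum_le_sum_abs _ _).trans (Finset.sum_le_sum fun k _ => ?_)
    rw [abs_mul, abs_mul]
    exact mul_le_mul_of_nonneg_right (h k) (by positivity)
  have h2 : ∑ k, |a k| * |b k| ≤ Real.sqrt (∑ k, a k ^ 2) * Real.sqrt (∑ k, b k ^ 2) := by
    have hcs := Finset.sum_mul_sq_le_sq_mul_sq Finset.univ (fun k => |a k|) (fun k => |b k|)
    simp only [sq_abs] at hcs
    calc ∑ k, |a k| * |b k| = Real.sqrt ((∑ k, |a k| * |b k|) ^ 2) := by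
          rw [Real.sqrt_sq (Finset.sum_nonneg fun k _ => by positivity)]
      _ ≤ Real.sqrt ((∑ k, a k ^ 2) * ∑ k, b k ^ 2) := Real.sqrt_le_sqrt hcs
      _ = _ := Real.sqrt_mul (Finset.sum_nonneg fun k _ => by positivity) _
  calc |∑ k, (e k - c) * (a k * b k)| ≤ ∑ k, r * (|a k| * |b k|) := h1
    _ = r * ∑ k, |a k| * |b k| := by rw [← Finset.mul_sum]
    _ ≤ _ := mul_le_mul_of_nonneg_left h2 hr

variable {m N : ℕ}

lemma coord_dot {B : Matrix (Fin m) (Fin m) ℝ} (hBh : B.IsHermitian) (x y : Fin m → ℝ) :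
    x ⬝ᵥ y = ∑ k, ((star (hBh.eigenvectorUnitary : Matrix (Fin m) (Fin m) ℝ) *ᵥ x) k)
      * ((star (hBh.eigenvectorUnitary : Matrix (Fin m) (Fin m) ℝ) *ᵥ y) k) := by
  set U := (hBh.eigenvectorUnitary : Matrix (Fin m) (Fin m) ℝ) with hU
  have hUU : U * star U = 1 := (Matrix.mem_unitaryGroup_iff).mp hBh.eigenvectorUnitary.2
  have h0 : ∑ k, (star U *ᵥ x) k * (star U *ᵥ y) k = (star U *ᵥ x) ⬝ᵥ (star U *ᵥ y) := rfl
  rw [h0, dotProduct_mulVec, ← mulVec_transpose, mulVec_mulVec,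
    Matrix.star_eq_conjTranspose, conjTranspose_eq_transpose_of_trivial, transpose_transpose,
    ← conjTranspose_eq_transpose_of_trivial, ← Matrix.star_eq_conjTranspose, hUU, one_mulVec]

lemma coord_quad {B : Matrix (Fin m) (Fin m) ℝ} (hBh : B.IsHermitian) (x y : Fin m → ℝ) :
    x ⬝ᵥ B *ᵥ y = ∑ k, hBh.eigenvalues k
      * (((star (hBh.eigenvectorUnitary : Matrix (Fin m) (Fin m) ℝ) *ᵥ x) k)
      * ((star (hBh.eigenvectorUnitary : Matrix (Fin m) (Fin m) ℝ) *ᵥ y) k)) := by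
  set U := (hBh.eigenvectorUnitary : Matrix (Fin m) (Fin m) ℝ) with hU
  set e := hBh.eigenvalues with he
  have hspec : B = U * diagonal (RCLike.ofReal ∘ e) * star U := hBh.spectral_theorem
  rw [RCLike.ofReal_real_eq_id, Function.id_comp] at hspec
  have hBy : B *ᵥ y = U *ᵥ (diagonal e *ᵥ (star U *ᵥ y)) := by
    rw [mulVec_mulVec, mulVec_mulVec, ← hspec]
  rw [hBy, dotProduct_mulVec, ← mulVec_transpose,
    Matrix.star_eq_conjTranspose, conjTranspose_eq_transpose_of_trivial]
  simp [dotProduct, mulVec_diagonal, mul_comm, mul_assoc, mul_left_comm]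

lemma vecMulVec_quad (u x : Fin m → ℝ) :
    x ⬝ᵥ (vecMulVec u u) *ᵥ x = (u ⬝ᵥ x) ^ 2 := by
  simp only [dotProduct, mulVec, vecMulVec_apply, sq, Finset.sum_mul, Finset.mul_sum]
  exact Finset.sum_congr rfl fun a _ => Finset.sum_congr rfl fun b _ => by ring

lemma matrix_sum_mulVec {ι k : ℕ} (s : Finset (Fin ι)) (A : Fin ι → Matrix (Fin m) (Fin k) ℝ)
    (x : Fin k → ℝ) : (∑ i ∈ s, A i) *ᵥ x = ∑ i ∈ s, A i *ᵥ x := by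
  ext r
  simp only [mulVec, dotProduct, Matrix.sum_apply, Finset.sum_apply, Finset.sum_mul]
  exact Finset.sum_comm

lemma dotProduct_sum' {ι : ℕ} (s : Finset (Fin ι)) (x : Fin m → ℝ) (v : Fin ι → Fin m → ℝ) :
    x ⬝ᵥ (∑ i ∈ s, v i) = ∑ i ∈ s, x ⬝ᵥ v i := by
  simp only [dotProduct, Finset.sum_apply, Finset.mul_sum]
  exact Finset.sum_comm

lemma infoMatrix_quad (f : Fin N → Fin m → ℝ) (w : Fin N → ℝ) (x : Fin m → ℝ) :
    x ⬝ᵥ (infoMatrix f w) *ᵥ x = ∑ j, w j * (f j ⬝ᵥ x) ^ 2 := by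
  rw [infoMatrix, matrix_sum_mulVec, dotProduct_sum']
  exact Finset.sum_congr rfl fun j _ => by
    rw [smul_mulVec, dotProduct_smul, smul_eq_mul, vecMulVec_quad]

lemma infoMatrix_herm (f : Fin N → Fin m → ℝ) (w : Fin N → ℝ) :
    (infoMatrix f w).IsHermitian := by
  show _ᴴ = _
  ext a b
  simp only [conjTranspose_apply, infoMatrix, Matrix.sum_apply, Matrix.smul_apply,
    vecMulVec_apply, smul_eq_mul, star_trivial]
  exact Finset.sum_congr rfl fun j _ => by ring

lemma infoMatrix_psd (f : Fin N → Fin m → ℝ) (w : Fin N → ℝ) (hw : ∀ j, 0 ≤ w j) :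
    (infoMatrix f w).PosSemidef := by
  refine PosSemidef.of_dotProduct_mulVec_nonneg (infoMatrix_herm f w) fun x => ?_
  have hst : star x = x := rfl
  rw [hst, infoMatrix_quad]
  exact Finset.sum_nonneg fun j _ => mul_nonneg (hw j) (sq_nonneg _)

lemma psd_det_nonneg_s18 {A : Matrix (Fin m) (Fin m) ℝ} (hA : A.PosSemidef) :
    0 ≤ A.det := by
  rw [hA.1.det_eq_prod_eigenvalues]
  refine Finset.prod_nonneg fun i _ => ?_
  simpa using hA.eigenvalues_nonneg i

lemma psd_posDef_of_det_ne_zero {A : Matrix (Fin m) (Fin m) ℝ} (hA : A.PosSemidef)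
    (hd : A.det ≠ 0) : A.PosDef := by
  refine PosDef.of_dotProduct_mulVec_pos hA.1 fun x hx => ?_
  rcases lt_or_eq_of_le (hA.dotProduct_mulVec_nonneg x) with h | h
  · exact h
  · exact absurd (Matrix.eq_zero_of_mulVec_eq_zero hd
      ((hA.dotProduct_mulVec_zero_iff x).mp h.symm)) hx

lemma conj_quad (S A : Matrix (Fin m) (Fin m) ℝ) (hS : Sᵀ = S) (a b : Fin m → ℝ) :
    (S *ᵥ a) ⬝ᵥ A *ᵥ (S *ᵥ b) = a ⬝ᵥ (S * A * S) *ᵥ b := by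
  rw [mulVec_mulVec, dotProduct_mulVec, ← mulVec_transpose, mulVec_mulVec,
    dotProduct_mulVec, ← mulVec_transpose]
  congr 1
  rw [Matrix.transpose_mul, Matrix.transpose_mul, Matrix.transpose_mul, hS, Matrix.mul_assoc]

lemma exact_design_exchange (n : ℕ) (hn : 0 < n) (w : Fin N → ℝ)
    (hw : IsExactDesign n w) (ℓ i : Fin N) (hℓ : 0 < w ℓ) (hil : i ≠ ℓ) :
    IsExactDesign n (fun j => w j + (if j = i then (1:ℝ)/n else 0)
      - (if j = ℓ then (1:ℝ)/n else 0)) := by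
  obtain ⟨⟨hnn, hsum⟩, hint⟩ := hw
  have hnR : (0:ℝ) < n := by exact_mod_cast hn
  have hwl : (1:ℝ)/n ≤ w ℓ := by
    obtain ⟨z, hz⟩ := hint ℓ
    have hz1 : (1:ℝ) ≤ z := by
      have : (0:ℝ) < (z:ℝ) := by rw [← hz]; positivity
      exact_mod_cast (by exact_mod_cast this : (0:ℤ) < z)
    rw [div_le_iff₀ hnR, mul_comm, ← hz] at *
    linarith [hz1, hz]
  refine ⟨⟨fun j => ?_, ?_⟩, fun j => ?_⟩
  · dsimp only
    by_cases h1 : j = ℓ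
    · subst h1
      rw [if_neg (fun h : j = i => hil h.symm), if_pos rfl]
      linarith
    · by_cases h2 : j = i
      · subst h2
        rw [if_pos rfl, if_neg h1]
        have h3 := hnn j
        have h4 : (0:ℝ) < 1/(n:ℝ) := by positivity
        linarith
      · rw [if_neg h1, if_neg h2]
        linarith [hnn j]
  · simp [Finset.sum_add_distrib, Finset.sum_sub_distrib, hsum]
  · dsimp only
    obtain ⟨z, hz⟩ := hint j
    by_cases h1 : j = i
    · subst h1
      refine ⟨z + 1, ?_⟩
      rw [if_pos rfl, if_neg hil]
      push_cast
      rw [mul_sub, mul_add, hz]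
      field_simp
      ring
    · by_cases h2 : j = ℓ
      · subst h2
        refine ⟨z - 1, ?_⟩
        rw [if_pos rfl, if_neg h1]
        push_cast
        rw [mul_sub, mul_add, hz]
        field_simp
        ring
      · exact ⟨z, by rw [if_neg h1, if_neg h2]; simp [hz]⟩

lemma infoMatrix_exchange (f : Fin N → Fin m → ℝ) (n : ℕ) (w : Fin N → ℝ)
    (ℓ i : Fin N) :
    infoMatrix f (fun j => w j + (if j = i then (1:ℝ)/n else 0) - (if j = ℓ then (1:ℝ)/n else 0))
      = infoMatrix f w + ((1:ℝ)/n) • vecMulVec (f i) (f i)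
        - ((1:ℝ)/n) • vecMulVec (f ℓ) (f ℓ) := by
  unfold infoMatrix
  simp only [sub_smul, add_smul, ite_smul, zero_smul, Finset.sum_sub_distrib,
    Finset.sum_add_distrib, Finset.sum_ite_eq', Finset.mem_univ, if_true]

lemma det_rank_two_update (M : Matrix (Fin m) (Fin m) ℝ) (hM : IsUnit M.det)
    (u v : Fin m → ℝ) (a : ℝ) :
    (M + (a • vecMulVec u u) - (a • vecMulVec v v)).det
      = M.det * (1 + a * (u ⬝ᵥ M⁻¹ *ᵥ u) - a * (v ⬝ᵥ M⁻¹ *ᵥ v)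
          - a^2 * ((u ⬝ᵥ M⁻¹ *ᵥ u) * (v ⬝ᵥ M⁻¹ *ᵥ v) - (u ⬝ᵥ M⁻¹ *ᵥ v) * (v ⬝ᵥ M⁻¹ *ᵥ u))) := by
  set A := M⁻¹ with hA
  set Um : Matrix (Fin m) (Fin 2) ℝ := Matrix.of (fun r c => if c = 0 then u r else v r) with hUm
  set Vm : Matrix (Fin 2) (Fin m) ℝ :=
    Matrix.of (fun r c => if r = 0 then a * u c else -(a * v c)) with hVm
  have hUV : M + (a • vecMulVec u u) - (a • vecMulVec v v) = M + Um * Vm := by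
    ext r c
    simp only [Matrix.add_apply, Matrix.sub_apply, Matrix.smul_apply, vecMulVec_apply,
      smul_eq_mul, Matrix.mul_apply, hUm, hVm, Matrix.of_apply, Fin.sum_univ_two]
    norm_num
    ring
  have hMA : M * A = 1 := Matrix.mul_nonsing_inv M hM
  have hfact : M + Um * Vm = M * (1 + (A * Um) * Vm) := by
    rw [Matrix.mul_add, Matrix.mul_one, ← Matrix.mul_assoc, ← Matrix.mul_assoc, hMA,
      Matrix.one_mul]
  have hdet : (M + Um * Vm).det = M.det * (1 + Vm * (A * Um)).det := by
    rw [hfact, Matrix.det_mul, Matrix.det_one_add_mul_comm]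
  have hAU : ∀ k c, (A * Um) k c = if c = 0 then (A *ᵥ u) k else (A *ᵥ v) k := by
    intro k c
    fin_cases c <;> simp [Matrix.mul_apply, mulVec, dotProduct, hUm]
  have hent : ∀ r c, (Vm * (A * Um)) r c =
      if r = 0 then (if c = 0 then a * (u ⬝ᵥ A *ᵥ u) else a * (u ⬝ᵥ A *ᵥ v))
      else (if c = 0 then -(a * (v ⬝ᵥ A *ᵥ u)) else -(a * (v ⬝ᵥ A *ᵥ v))) := by
    intro r c
    have hterm : ∀ k, Vm r k * (A * Um) k c
        = Vm r k * (if c = 0 then (A *ᵥ u) k else (A *ᵥ v) k) := by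
      intro k; rw [hAU]
    rw [Matrix.mul_apply]
    simp only [hterm]
    fin_cases r <;> fin_cases c <;>
      simp [hVm, dotProduct, Finset.mul_sum] <;>
      exact Finset.sum_congr rfl fun k _ => by ring
  have h2 : (1 + Vm * (A * Um)).det
      = (1 + a * (u ⬝ᵥ A *ᵥ u)) * (1 + -(a * (v ⬝ᵥ A *ᵥ v)))
        - (a * (u ⬝ᵥ A *ᵥ v)) * (-(a * (v ⬝ᵥ A *ᵥ u))) := by
    rw [Matrix.det_fin_two]
    simp only [Matrix.add_apply, Matrix.one_apply, hent]
    norm_num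
  rw [hUV, hdet, h2]
  ring

lemma exchange_ineq (hm : 0 < m) (f : Fin N → Fin m → ℝ) (n : ℕ) (hn : 0 < n)
    (wopt : Fin N → ℝ) (hopt : IsDOptimalExact f n wopt)
    (hdet : (infoMatrix f wopt).det ≠ 0) (ℓ i : Fin N) (hℓ : 0 < wopt ℓ) :
    (n:ℝ) * ((f i ⬝ᵥ (infoMatrix f wopt)⁻¹ *ᵥ f i) - (f ℓ ⬝ᵥ (infoMatrix f wopt)⁻¹ *ᵥ f ℓ))
      ≤ (f i ⬝ᵥ (infoMatrix f wopt)⁻¹ *ᵥ f i) * (f ℓ ⬝ᵥ (infoMatrix f wopt)⁻¹ *ᵥ f ℓ)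
        - (f i ⬝ᵥ (infoMatrix f wopt)⁻¹ *ᵥ f ℓ) * (f ℓ ⬝ᵥ (infoMatrix f wopt)⁻¹ *ᵥ f i) := by
  by_cases hil : i = ℓ
  · subst hil
    simp only [sub_self, mul_zero]
    nlinarith [sq_nonneg (f i ⬝ᵥ (infoMatrix f wopt)⁻¹ *ᵥ f i)]
  · set M := infoMatrix f wopt with hMdef
    have hMdetpos : 0 < M.det :=
      lt_of_le_of_ne (psd_det_nonneg_s18 (infoMatrix_psd f wopt hopt.1.1.1)) (Ne.symm hdet)
    have hw' := exact_design_exchange n hn wopt hopt.1 ℓ i hℓ hil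
    have hcrit := hopt.2 _ hw'
    have hdet2 : (infoMatrix f (fun j => wopt j + (if j = i then (1:ℝ)/n else 0)
        - (if j = ℓ then (1:ℝ)/n else 0))).det ≤ M.det := by
      by_contra hcon
      push_neg at hcon
      have hlt : Dcrit M < Dcrit (infoMatrix f (fun j => wopt j + (if j = i then (1:ℝ)/n else 0)
          - (if j = ℓ then (1:ℝ)/n else 0))) := by
        unfold Dcrit
        exact Real.rpow_lt_rpow hMdetpos.le hcon (by positivity)
      exact absurd hcrit (not_le.mpr hlt)
    rw [infoMatrix_exchange, det_rank_two_update M (isUnit_iff_ne_zero.mpr hdet) (f i) (f ℓ)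
      ((1:ℝ)/n)] at hdet2
    set di := f i ⬝ᵥ M⁻¹ *ᵥ f i
    set dl := f ℓ ⬝ᵥ M⁻¹ *ᵥ f ℓ
    set dil := f i ⬝ᵥ M⁻¹ *ᵥ f ℓ
    set dli := f ℓ ⬝ᵥ M⁻¹ *ᵥ f i
    have key : ((1:ℝ)/n) * di - ((1:ℝ)/n) * dl - ((1:ℝ)/n)^2 * (di * dl - dil * dli) ≤ 0 := by
      nlinarith [hdet2, hMdetpos]
    have hnR : (0:ℝ) < n := by exact_mod_cast hn
    have hmul := mul_le_mul_of_nonneg_left key (le_of_lt (by positivity : (0:ℝ) < (n:ℝ)^2))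
    have e1 : (n:ℝ)^2 * (((1:ℝ)/n) * di - ((1:ℝ)/n) * dl - ((1:ℝ)/n)^2 * (di * dl - dil * dli))
        = (n:ℝ) * (di - dl) - (di * dl - dil * dli) := by
      field_simp
    rw [e1, mul_zero] at hmul
    linarith

end Helpers

theorem exchange_eigenvalue_form {m N : ℕ} (hm : 2 ≤ m) (hN : 2 ≤ N)
    (f : Fin N → Fin m → ℝ) (n : ℕ) (hn : m ≤ n)
    (hex : ∃ w : Fin N → ℝ, IsExactDesign n w ∧ (infoMatrix f w).det ≠ 0)
    (wapp : Fin N → ℝ) (happ : IsDOptimalApprox f wapp)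
    (hpd : (infoMatrix f wapp).PosDef)
    (s : Fin N → Fin m → ℝ)
    (hs : ∀ j : Fin N, s j = (CFC.sqrt (infoMatrix f wapp))⁻¹ *ᵥ f j)
    (wopt : Fin N → ℝ) (hopt : IsDOptimalExact f n wopt)
    (hoptns : (infoMatrix f wopt).det ≠ 0)
    (B : Matrix (Fin m) (Fin m) ℝ)
    (hBdef : B = CFC.sqrt (infoMatrix f wapp) * (infoMatrix f wopt)⁻¹ * CFC.sqrt (infoMatrix f wapp))
    (γ : Fin m → ℝ) (hmono : Monotone γ) (hBh : B.IsHermitian)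
    (hγ : ∃ σ : Equiv.Perm (Fin m), γ = hBh.eigenvalues ∘ σ)
    (ℓ : Fin N) (hℓ : 0 < wopt ℓ) (i : Fin N) :
    (n : ℝ) * (γ ⟨0, by omega⟩ * disc (s i) (s ℓ) - γ ⟨m - 1, by omega⟩ * disc (s ℓ) (s i)) ≤
      γ ⟨m - 2, by omega⟩ * γ ⟨m - 1, by omega⟩ *
        (eucNorm (s i) ^ 2 * eucNorm (s ℓ) ^ 2 - (s i ⬝ᵥ s ℓ) ^ 2) := by
  classical
  obtain ⟨σ, hσ⟩ := hγ
  -- basic matrix facts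
  set S := CFC.sqrt (infoMatrix f wapp) with hSdef
  have hSherm : S.IsHermitian := (Matrix.nonneg_iff_posSemidef.mp (CFC.sqrt_nonneg _)).1
  have hSH : Sᴴ = S := hSherm
  have hSt : Sᵀ = S := by rw [← conjTranspose_eq_transpose_of_trivial]; exact hSH
  have hSS : S * S = infoMatrix f wapp := CFC.sqrt_mul_sqrt_self _ (Matrix.nonneg_iff_posSemidef.mpr hpd.posSemidef)
  have hSdetne : S.det ≠ 0 := by
    intro h
    have h2 := hpd.det_pos
    rw [← hSS, Matrix.det_mul, h, zero_mul] at h2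
    exact lt_irrefl 0 h2
  have hfS : ∀ j, f j = S *ᵥ s j := fun j => by
    rw [hs j, mulVec_mulVec, Matrix.mul_nonsing_inv _ (isUnit_iff_ne_zero.mpr hSdetne),
      one_mulVec]
  have hquadB : ∀ a b : Fin N, f a ⬝ᵥ (infoMatrix f wopt)⁻¹ *ᵥ f b = s a ⬝ᵥ B *ᵥ s b := by
    intro a b
    rw [hfS a, hfS b, conj_quad S (infoMatrix f wopt)⁻¹ hSt, hBdef]
  have hMnpd : (infoMatrix f wopt).PosDef :=
    psd_posDef_of_det_ne_zero (infoMatrix_psd f wopt hopt.1.1.1) hoptns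
  have hBpsd : B.PosSemidef := by
    rw [hBdef]
    have h3 := hMnpd.inv.posSemidef.conjTranspose_mul_mul_same S
    rwa [hSH] at h3
  set e := hBh.eigenvalues with he
  have he_nonneg : ∀ k, 0 ≤ e k := fun k => hBpsd.eigenvalues_nonneg k
  have hγe : ∀ k, e k = γ (σ.symm k) := fun k => by
    rw [hσ]; simp
  have hγval : ∀ t, γ t = e (σ t) := fun t => by rw [hσ]; rfl
  have hγnn : ∀ t, 0 ≤ γ t := fun t => by rw [hγval t]; exact he_nonneg (σ t)
  -- exchange inequality transported to B
  have hex2 : (n : ℝ) * ((s i ⬝ᵥ B *ᵥ s i) - (s ℓ ⬝ᵥ B *ᵥ s ℓ))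
      ≤ (s i ⬝ᵥ B *ᵥ s i) * (s ℓ ⬝ᵥ B *ᵥ s ℓ) - (s i ⬝ᵥ B *ᵥ s ℓ) * (s ℓ ⬝ᵥ B *ᵥ s i) := by
    have h4 := exchange_ineq (by omega) f n (by omega) wopt hopt hoptns ℓ i hℓ
    rwa [hquadB i i, hquadB ℓ ℓ, hquadB i ℓ, hquadB ℓ i] at h4
  -- coordinates
  have hEi := coord_quad hBh (s i) (s i)
  have hEl := coord_quad hBh (s ℓ) (s ℓ)
  have hEil := coord_quad hBh (s i) (s ℓ)
  have hEli := coord_quad hBh (s ℓ) (s i)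
  have hDii := coord_dot hBh (s i) (s i)
  have hDll := coord_dot hBh (s ℓ) (s ℓ)
  have hDil := coord_dot hBh (s i) (s ℓ)
  have hDxx := coord_dot hBh (s i + s ℓ) (s i + s ℓ)
  have hDyy := coord_dot hBh (s i - s ℓ) (s i - s ℓ)
  rw [Matrix.mulVec_add] at hDxx
  rw [Matrix.mulVec_sub] at hDyy
  set P := star (hBh.eigenvectorUnitary : Matrix (Fin m) (Fin m) ℝ) *ᵥ s i with hPdef
  set Q := star (hBh.eigenvectorUnitary : Matrix (Fin m) (Fin m) ℝ) *ᵥ s ℓ with hQdef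
  -- norm facts
  have hnormsq : ∀ v : Fin m → ℝ, eucNorm v ^ 2 = ∑ k, v k ^ 2 := fun v =>
    Real.sq_sqrt (Finset.sum_nonneg fun k _ => sq_nonneg _)
  have hselfdot : ∀ v : Fin m → ℝ, v ⬝ᵥ v = ∑ k, v k ^ 2 := fun v => by
    simp [dotProduct, sq]
  -- key sum-level quantities
  have A1 : s i ⬝ᵥ B *ᵥ s i = ∑ k, e k * P k ^ 2 := by
    rw [hEi]; exact Finset.sum_congr rfl fun k _ => by ring
  have A2 : s ℓ ⬝ᵥ B *ᵥ s ℓ = ∑ k, e k * Q k ^ 2 := by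
    rw [hEl]; exact Finset.sum_congr rfl fun k _ => by ring
  have A3 : s i ⬝ᵥ B *ᵥ s ℓ = ∑ k, e k * (P k * Q k) := by
    rw [hEil]
  have A4 : s ℓ ⬝ᵥ B *ᵥ s i = ∑ k, e k * (P k * Q k) := by
    rw [hEli]; exact Finset.sum_congr rfl fun k _ => by ring
  have B1 : eucNorm (s i) ^ 2 = ∑ k, P k ^ 2 := by
    rw [hnormsq, ← hselfdot, hDii]
    exact Finset.sum_congr rfl fun k _ => by ring
  have B2 : eucNorm (s ℓ) ^ 2 = ∑ k, Q k ^ 2 := by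
    rw [hnormsq, ← hselfdot, hDll]
    exact Finset.sum_congr rfl fun k _ => by ring
  have B3 : s i ⬝ᵥ s ℓ = ∑ k, P k * Q k := by rw [hDil]
  have B4 : eucNorm (s i + s ℓ) = Real.sqrt (∑ k, (P k + Q k) ^ 2) := by
    unfold eucNorm
    congr 1
    rw [← hselfdot, hDxx]
    exact Finset.sum_congr rfl fun k _ => by
      simp [Pi.add_apply]; ring
  have B5 : eucNorm (s i - s ℓ) = Real.sqrt (∑ k, (P k - Q k) ^ 2) := by
    unfold eucNorm
    congr 1
    rw [← hselfdot, hDyy]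
    exact Finset.sum_congr rfl fun k _ => by
      simp [Pi.sub_apply]; ring
  have B4' : eucNorm (s ℓ + s i) = Real.sqrt (∑ k, (P k + Q k) ^ 2) := by
    rw [show s ℓ + s i = s i + s ℓ from add_comm _ _, B4]
  have B5' : eucNorm (s ℓ - s i) = Real.sqrt (∑ k, (P k - Q k) ^ 2) := by
    have h9 : eucNorm (s ℓ - s i) = eucNorm (s i - s ℓ) := by
      unfold eucNorm
      refine congrArg Real.sqrt (Finset.sum_congr rfl fun k _ => ?_)
      simp only [Pi.sub_apply]
      ring
    rw [h9, B5]
  -- disc expressions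
  have hd1 : disc (s i) (s ℓ) = (Real.sqrt (∑ k, (P k + Q k) ^ 2)
      * Real.sqrt (∑ k, (P k - Q k) ^ 2) + (∑ k, P k ^ 2) - (∑ k, Q k ^ 2)) / 2 := by
    rw [disc, B4, B5, B1, B2]
  have hd2 : disc (s ℓ) (s i) = (Real.sqrt (∑ k, (P k + Q k) ^ 2)
      * Real.sqrt (∑ k, (P k - Q k) ^ 2) + (∑ k, Q k ^ 2) - (∑ k, P k ^ 2)) / 2 := by
    rw [disc, B4', B5', B1, B2]
  -- main abstract inequality
  have key : ∀ g0 g1 g2 : ℝ, (∀ k, g0 ≤ e k) → (∀ k, e k ≤ g1) →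
      (∀ j k : Fin m, j ≠ k → e j * e k ≤ g2 * g1) →
      (n : ℝ) * (g0 * disc (s i) (s ℓ) - g1 * disc (s ℓ) (s i))
        ≤ g2 * g1 * (eucNorm (s i) ^ 2 * eucNorm (s ℓ) ^ 2 - (s i ⬝ᵥ s ℓ) ^ 2) := by
    intro g0 g1 g2 hlb hub hpair
    have hg01 : g0 ≤ g1 := le_trans (hlb ⟨0, by omega⟩) (hub ⟨0, by omega⟩)
    rw [hd1, hd2, B1, B2, B3]
    set X := Real.sqrt (∑ k, (P k + Q k) ^ 2) with hX
    set Y := Real.sqrt (∑ k, (P k - Q k) ^ 2) with hY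
    -- Cauchy-Schwarz / operator-norm step
    have hCS := abs_weighted_sum_le e (fun k => P k + Q k) (fun k => P k - Q k)
      ((g0 + g1) / 2) ((g1 - g0) / 2) (by linarith)
      (fun k => abs_le.mpr ⟨by linarith [hlb k], by linarith [hub k]⟩)
    have hsplit : ∑ k, (e k - (g0 + g1) / 2) * ((P k + Q k) * (P k - Q k))
        = ((∑ k, e k * P k ^ 2) - (∑ k, e k * Q k ^ 2))
          - ((g0 + g1) / 2) * ((∑ k, P k ^ 2) - (∑ k, Q k ^ 2)) := by
      rw [Finset.sum_congr rfl (fun k _ => show (e k - (g0 + g1) / 2) * ((P k + Q k) * (P k - Q k))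
        = (e k * P k ^ 2 - e k * Q k ^ 2) - ((g0 + g1) / 2) * (P k ^ 2 - Q k ^ 2) from by ring)]
      simp only [Finset.sum_sub_distrib, ← Finset.mul_sum]
    rw [hsplit] at hCS
    have habs := (abs_le.mp hCS).1
    -- step 2 combined
    have h2a : ((g0 + g1) / 2) * ((∑ k, P k ^ 2) - (∑ k, Q k ^ 2)) - ((g1 - g0) / 2) * (X * Y)
        ≤ (∑ k, e k * P k ^ 2) - (∑ k, e k * Q k ^ 2) := by linarith
    have hn0 : (0:ℝ) ≤ (n:ℝ) := Nat.cast_nonneg n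
    have hstep2 := mul_le_mul_of_nonneg_left h2a hn0
    -- step 1
    have hex3 : (n : ℝ) * ((∑ k, e k * P k ^ 2) - (∑ k, e k * Q k ^ 2))
        ≤ (∑ k, e k * P k ^ 2) * (∑ k, e k * Q k ^ 2) - (∑ k, e k * (P k * Q k)) ^ 2 := by
      have h5 := hex2
      rw [A1, A2, A3, A4] at h5
      calc (n : ℝ) * ((∑ k, e k * P k ^ 2) - (∑ k, e k * Q k ^ 2)) ≤
          (∑ k, e k * P k ^ 2) * (∑ k, e k * Q k ^ 2)
            - (∑ k, e k * (P k * Q k)) * (∑ k, e k * (P k * Q k)) := h5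
        _ = _ := by ring
    -- step 3
    have hlag1 := lagrange_id Finset.univ e P Q
    have hlag2 := lagrange_id Finset.univ (fun _ => (1:ℝ)) P Q
    simp only [one_mul] at hlag2
    have hcomp : ∑ j, ∑ k, (e j * e k) * (P j * Q k - P k * Q j) ^ 2
        ≤ ∑ j, ∑ k, (g2 * g1) * (P j * Q k - P k * Q j) ^ 2 := by
      refine Finset.sum_le_sum fun j _ => Finset.sum_le_sum fun k _ => ?_
      by_cases hjk : j = k
      · subst hjk
        simp [sub_self]
      · exact mul_le_mul_of_nonneg_right (hpair j k hjk) (sq_nonneg _)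
    have hpull : ∑ j, ∑ k, (g2 * g1) * (P j * Q k - P k * Q j) ^ 2
        = (g2 * g1) * ∑ j, ∑ k, (P j * Q k - P k * Q j) ^ 2 := by
      simp only [← Finset.mul_sum]
    rw [hpull] at hcomp
    -- assemble
    calc (n:ℝ) * (g0 * ((X * Y + (∑ k, P k ^ 2) - (∑ k, Q k ^ 2)) / 2)
          - g1 * ((X * Y + (∑ k, Q k ^ 2) - (∑ k, P k ^ 2)) / 2))
        = (n:ℝ) * (((g0 + g1) / 2) * ((∑ k, P k ^ 2) - (∑ k, Q k ^ 2))
          - ((g1 - g0) / 2) * (X * Y)) := by ring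
      _ ≤ (n:ℝ) * ((∑ k, e k * P k ^ 2) - (∑ k, e k * Q k ^ 2)) := hstep2
      _ ≤ (∑ k, e k * P k ^ 2) * (∑ k, e k * Q k ^ 2) - (∑ k, e k * (P k * Q k)) ^ 2 := hex3
      _ = (1/2) * ∑ j, ∑ k, (e j * e k) * (P j * Q k - P k * Q j) ^ 2 := hlag1
      _ ≤ (1/2) * ((g2 * g1) * ∑ j, ∑ k, (P j * Q k - P k * Q j) ^ 2) := by linarith
      _ = g2 * g1 * ((∑ k, P k ^ 2) * (∑ k, Q k ^ 2) - (∑ k, P k * Q k) ^ 2) := by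
          rw [show (∑ k, P k ^ 2) * (∑ k, Q k ^ 2) - (∑ k, P k * Q k) ^ 2
            = (1/2) * ∑ j, ∑ k, (P j * Q k - P k * Q j) ^ 2 from hlag2]
          ring
  -- eigenvalue bounds for the particular γ values
  refine key _ _ _ (fun k => ?_) (fun k => ?_) (fun j k hjk => ?_)
  · rw [hγe k]
    exact hmono (by simp [Fin.le_def])
  · rw [hγe k]
    refine hmono ?_
    have h6 := (σ.symm k).isLt
    simp only [Fin.le_def]
    omega
  · rw [hγe j, hγe k]
    have haneb : σ.symm j ≠ σ.symm k := fun h => hjk (by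
      have := congrArg σ h
      simpa using this)
    have h2 : ∀ x y : Fin m, x < y →
        γ x * γ y ≤ γ ⟨m - 2, by omega⟩ * γ ⟨m - 1, by omega⟩ := by
      intro x y hxy
      have hx : γ x ≤ γ ⟨m - 2, by omega⟩ := by
        refine hmono ?_
        have h7 := y.isLt
        have h8 : (x : ℕ) < (y : ℕ) := hxy
        simp only [Fin.le_def]
        omega
      have hy : γ y ≤ γ ⟨m - 1, by omega⟩ := by
        refine hmono ?_
        have h7 := y.isLt
        simp only [Fin.le_def]
        omega
      exact mul_le_mul hx hy (hγnn y) (le_trans (hγnn x) hx)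
    rcases lt_or_gt_of_ne haneb with h | h
    · exact h2 _ _ h
    · rw [mul_comm]
      exact h2 _ _ h
end
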